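/- Let N = 2^n, let ε ∈ (0,1), and let K = (k_1, …, k_d) be a sequence of integers in {0, …, N−1} with d ≥ 1 satisfying: for every integer l with 1 ≤ l ≤ N−1, |(1/d)·∑_{i=1}^{d} cos(2π k_i l / N)| < ε. Then the quantum hash function ψ_K is ε-resistant: for all M₁, M₂ ∈ {0, …, N−1} with M₁ ≠ M₂, |⟪ψ_K(M₁), ψ_K(M₂)⟫| < ε. -/

import Mathlib

open scoped BigOperators

/-- The quantum hash of a message `M ∈ {0, …, N−1}` determined by the
sequence `K = (k_1, …, k_d)` of integers in `{0, …, N−1}`. -/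
noncomputable def quantumHash (N d : ℕ) (K : Fin d → ℕ) (M : ℕ) :
    EuclideanSpace ℂ (Fin d × Fin 2) := WithLp.toLp 2 fun p =>
  if p.2 = (0 : Fin 2)
  then ((1 / Real.sqrt d) * Real.cos (2 * Real.pi * (K p.1) * M / N) : ℝ)
  else ((1 / Real.sqrt d) * Real.sin (2 * Real.pi * (K p.1) * M / N) : ℝ)

/-! Since `cos a cos b + sin a sin b = cos (a - b)`, the inner product of two hashes is the
normalized cosine sum `(1/d) ∑ cos (2π k_i (M₁ - M₂) / N)`, and as cosine is even this is the
sum at `l = |M₁ - M₂| ∈ {1, …, N-1}`. -/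

open Real

lemma cos_mul_abs (c t : ℝ) : cos (c * |t|) = cos (c * t) := by
  rcases abs_choice t with h | h <;> simp [h]

lemma inner_quantumHash (N d : ℕ) (K : Fin d → ℕ) (M₁ M₂ : ℕ) :
    inner ℂ (quantumHash N d K M₁) (quantumHash N d K M₂)
      = ((1 / (d : ℝ) * ∑ i, cos (2 * π * K i * ((M₁ : ℝ) - M₂) / N) : ℝ) : ℂ) := by
  have hsqrt : 1 / √d * (1 / √d) = 1 / (d : ℝ) := by
    rw [one_div_mul_one_div, mul_self_sqrt (Nat.cast_nonneg d)]
  simp only [PiLp.inner_apply, quantumHash, RCLike.inner_apply',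
    Fintype.sum_prod_type, Fin.sum_univ_two, reduceIte, one_ne_zero, Complex.conj_ofReal,
    ← Complex.ofReal_mul, ← Complex.ofReal_add, ← Complex.ofReal_sum, Complex.ofReal_inj,
    Finset.mul_sum]
  refine Finset.sum_congr rfl fun i _ => ?_
  rw [show 2 * π * K i * ((M₁ : ℝ) - M₂) / N = 2 * π * K i * M₁ / N - 2 * π * K i * M₂ / N by
    ring, cos_sub, ← hsqrt]
  ring

lemma norm_inner_quantumHash (N d : ℕ) (K : Fin d → ℕ) (M₁ M₂ : ℕ) :
    ‖inner ℂ (quantumHash N d K M₁) (quantumHash N d K M₂)‖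
      = |1 / (d : ℝ) * ∑ i, cos (2 * π * K i * ((M₁ - M₂ : ℤ).natAbs : ℕ) / N)| := by
  rw [inner_quantumHash, Complex.norm_real, Real.norm_eq_abs]
  congr 3 with i
  rw [Nat.cast_natAbs, Int.cast_abs, mul_div_right_comm _ |_|, cos_mul_abs]
  push_cast
  ring_nf

theorem quantumHash_eps_resistant_general
    (N : ℕ) (ε : ℝ)
    (d : ℕ) (K : Fin d → ℕ)
    (hsmall : ∀ l : ℕ, 1 ≤ l → l ≤ N - 1 →
      |(1 / (d : ℝ)) * ∑ i, Real.cos (2 * Real.pi * (K i) * l / N)| < ε) :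
    ∀ M₁ M₂ : ℕ, M₁ < N → M₂ < N → M₁ ≠ M₂ →
      ‖(inner ℂ (quantumHash N d K M₁) (quantumHash N d K M₂) : ℂ)‖ < ε := by
  intro M₁ M₂ hM₁ hM₂ hne
  rw [norm_inner_quantumHash]
  exact hsmall _ (by omega) (by omega)

/-- If the normalized cosine sums of `K` at every `l ∈ {1, …, N−1}` are `< ε`,
then the quantum hash function `ψ_K` is `ε`-resistant: the hashes of any two
distinct messages are `ε`-orthogonal. -/
theorem quantumHash_eps_resistant
    (n : ℕ) (N : ℕ) (hN : N = 2 ^ n) (ε : ℝ) (hε : ε ∈ Set.Ioo (0 : ℝ) 1)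
    (d : ℕ) (hd : 1 ≤ d) (K : Fin d → ℕ) (hK : ∀ i, K i < N)
    (hsmall : ∀ l : ℕ, 1 ≤ l → l ≤ N - 1 →
      |(1 / (d : ℝ)) * ∑ i, Real.cos (2 * Real.pi * (K i) * l / N)| < ε) :
    ∀ M₁ M₂ : ℕ, M₁ < N → M₂ < N → M₁ ≠ M₂ →
      ‖(inner ℂ (quantumHash N d K M₁) (quantumHash N d K M₂) : ℂ)‖ < ε :=
  quantumHash_eps_resistant_general N ε d K hsmall
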